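/- For every real q>1, every n≥1, every k≥0 and every x∈(0,∞), the q-derivative of the q-Szász basis function satisfies x·D_q s_{n,k}(q;x) = [n]_q·([k]_q/[n]_q − x)·s_{n,k}(q;x). -/

import Mathlib

open scoped BigOperators

/-- The `q`-integer `[k]_q = (q^k - 1)/(q - 1)`. -/
noncomputable def qNat (q : ℝ) (k : ℕ) : ℝ := (q ^ k - 1) / (q - 1)

/-- The `q`-factorial `[k]_q! = [1]_q [2]_q ⋯ [k]_q`, with `[0]_q! = 1`. -/
noncomputable def qFactorial (q : ℝ) : ℕ → ℝ
  | 0 => 1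
  | k + 1 => qFactorial q k * qNat q (k + 1)

/-- The `q`-exponential function `e_q(z) = ∑_{k=0}^∞ z^k/[k]_q!`. -/
noncomputable def qExp (q z : ℝ) : ℝ := ∑' k : ℕ, z ^ k / qFactorial q k

/-- The `q`-Szász basis function
`s_{n,k}(q;x) = q^{-k(k-1)/2} ([n]_q^k x^k/[k]_q!) e_q(-[n]_q q^{-k} x)`. -/
noncomputable def qSzaszBasis (q : ℝ) (n k : ℕ) (x : ℝ) : ℝ :=
  (q ^ (k * (k - 1) / 2))⁻¹ * (qNat q n ^ k * x ^ k / qFactorial q k) *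
    qExp q (-(qNat q n) * q ^ (-(k : ℤ)) * x)

/-- The `q`-Szász operator `M_{n,q}(f;x) = ∑_{k=0}^∞ f([k]_q/[n]_q) s_{n,k}(q;x)`. -/
noncomputable def qSzasz (q : ℝ) (n : ℕ) (f : ℝ → ℝ) (x : ℝ) : ℝ :=
  ∑' k : ℕ, f (qNat q k / qNat q n) * qSzaszBasis q n k x

/-- The weight `w_0(x) = 1`, `w_p(x) = (1 + x^p)⁻¹` for `p ≥ 1`. -/
noncomputable def weight (p : ℕ) (x : ℝ) : ℝ := if p = 0 then 1 else (1 + x ^ p)⁻¹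

/-- The weighted sup-norm `‖f‖_p = sup_{x ≥ 0} w_p(x)|f(x)|`. -/
noncomputable def wnorm (p : ℕ) (f : ℝ → ℝ) : ℝ :=
  ⨆ x : Set.Ici (0 : ℝ), weight p x.1 * |f x.1|

/-- Membership in the space `C_p`: `f` is continuous on `[0,∞)` and `w_p f` is
uniformly continuous and bounded on `[0,∞)`. -/
def MemCp (p : ℕ) (f : ℝ → ℝ) : Prop :=
  ContinuousOn f (Set.Ici 0) ∧
  UniformContinuousOn (fun x => weight p x * f x) (Set.Ici 0) ∧
  ∃ M : ℝ, ∀ x ∈ Set.Ici (0 : ℝ), |weight p x * f x| ≤ M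

/-- The second difference `Δ_h² f(x) = f(x+2h) - 2f(x+h) + f(x)`. -/
noncomputable def delta2 (f : ℝ → ℝ) (h x : ℝ) : ℝ := f (x + 2 * h) - 2 * f (x + h) + f x

/-- The second modulus of smoothness `ω_p²(f;δ) = sup_{0<h≤δ} ‖Δ_h² f‖_p`. -/
noncomputable def omega2 (p : ℕ) (f : ℝ → ℝ) (δ : ℝ) : ℝ :=
  ⨆ h : {h : ℝ // 0 < h ∧ h ≤ δ}, wnorm p (fun x => delta2 f h.1 x)

/-- The (first) modulus of continuity on `[0,∞)`:
`ω(g;δ) = sup {|g(s)-g(t)| : s,t ≥ 0, |s-t| ≤ δ}`. -/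
noncomputable def omega1 (g : ℝ → ℝ) (δ : ℝ) : ℝ :=
  sSup {d : ℝ | ∃ s t : ℝ, 0 ≤ s ∧ 0 ≤ t ∧ |s - t| ≤ δ ∧ d = |g s - g t|}

/-- The `q`-derivative `(D_q g)(x) = (g(qx) - g(x))/((q-1)x)`. -/
noncomputable def qDeriv (q : ℝ) (g : ℝ → ℝ) (x : ℝ) : ℝ := (g (q * x) - g x) / ((q - 1) * x)

/-- The `q`-Stirling-type numbers: `S_q(0,0)=1`, `S_q(m,0)=0` for `m>0`,
`S_q(m,j)=0` for `m<j`, and `S_q(m+1,j)=[j]_q S_q(m,j) + S_q(m,j-1)`. -/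
noncomputable def qStirling (q : ℝ) : ℕ → ℕ → ℝ
  | 0, 0 => 1
  | 0, _ + 1 => 0
  | _ + 1, 0 => 0
  | m + 1, j + 1 => qNat q (j + 1) * qStirling q m (j + 1) + qStirling q m j

/-! Comparing `[k]_q! ≥ k!` with the exponential series shows that `e_q` converges everywhere,
and splitting off the constant term of `e_q(qz) - e_q(z) = ∑ (q^k - 1) z^k/[k]_q!` gives the
functional equation `e_q(qz) = (1 + (q - 1) z) e_q(z)`. Since `s_{n,k}(q;x)` is
`x^k e_q(-[n]_q q^{-k} x)` up to a constant, this yields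
`s_{n,k}(q;qx) - s_{n,k}(q;x) = (q - 1)([k]_q - [n]_q x) s_{n,k}(q;x)`,
and `x D_q g(x) = (g(qx) - g(x))/(q - 1)`. -/

open Nat

lemma qNat_eq_geom_sum {q : ℝ} (hq : q ≠ 1) (k : ℕ) :
    qNat q k = ∑ i ∈ Finset.range k, q ^ i :=
  (geom_sum_eq hq k).symm

lemma sub_one_mul_qNat {q : ℝ} (hq : q ≠ 1) (k : ℕ) : (q - 1) * qNat q k = q ^ k - 1 := by
  rw [qNat, mul_div_cancel₀ _ (sub_ne_zero.mpr hq)]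

lemma natCast_le_qNat {q : ℝ} (hq : 1 < q) (k : ℕ) : (k : ℝ) ≤ qNat q k := by
  rw [qNat_eq_geom_sum hq.ne']
  simpa using Finset.sum_le_sum fun i (_ : i ∈ Finset.range k) => one_le_pow₀ (n := i) hq.le

lemma qNat_pos {q : ℝ} (hq : 1 < q) {k : ℕ} (hk : 0 < k) : 0 < qNat q k :=
  (Nat.cast_pos.mpr hk).trans_le (natCast_le_qNat hq k)

lemma factorial_le_qFactorial {q : ℝ} (hq : 1 < q) : ∀ k, (k ! : ℝ) ≤ qFactorial q k
  | 0 => by simp [qFactorial]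
  | k + 1 => by
    rw [qFactorial, factorial_succ, cast_mul, mul_comm]
    exact mul_le_mul (factorial_le_qFactorial hq k) (natCast_le_qNat hq (k + 1)) (by positivity)
      ((Nat.cast_nonneg _).trans (factorial_le_qFactorial hq k))

lemma qFactorial_pos {q : ℝ} (hq : 1 < q) (k : ℕ) : 0 < qFactorial q k :=
  (Nat.cast_pos.mpr (factorial_pos k)).trans_le (factorial_le_qFactorial hq k)

lemma summable_qExp {q : ℝ} (hq : 1 < q) (z : ℝ) :
    Summable fun k : ℕ => z ^ k / qFactorial q k := by
  refine (Real.summable_pow_div_factorial |z|).of_norm_bounded fun k => ?_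
  rw [norm_div, norm_pow, Real.norm_eq_abs, Real.norm_of_nonneg (qFactorial_pos hq k).le]
  exact div_le_div_of_nonneg_left (by positivity) (by positivity) (factorial_le_qFactorial hq k)

lemma qExp_mul_left {q : ℝ} (hq : 1 < q) (z : ℝ) :
    qExp q (q * z) = (1 + (q - 1) * z) * qExp q z := by
  have hterm (k : ℕ) :
      (q * z) ^ (k + 1) / qFactorial q (k + 1) - z ^ (k + 1) / qFactorial q (k + 1) =
        (q - 1) * z * (z ^ k / qFactorial q k) := by
    rw [qFactorial, mul_pow, ← sub_div, ← sub_one_mul, ← sub_one_mul_qNat hq.ne', pow_succ]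
    field_simp [(qNat_pos hq k.succ_pos).ne', (qFactorial_pos hq k).ne']
  have hdiff : qExp q (q * z) - qExp q z = (q - 1) * z * qExp q z := by
    rw [qExp, qExp, ← (summable_qExp hq _).tsum_sub (summable_qExp hq _),
      ((summable_qExp hq _).sub (summable_qExp hq _)).tsum_eq_zero_add]
    simp only [hterm, tsum_mul_left]
    simp
  linear_combination hdiff

lemma qSzaszBasis_mul_left_sub {q : ℝ} (hq : 1 < q) (n k : ℕ) (x : ℝ) :
    qSzaszBasis q n k (q * x) - qSzaszBasis q n k x =
      (q - 1) * (qNat q k - qNat q n * x) * qSzaszBasis q n k x := by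
  have harg : -qNat q n * q ^ (-(k : ℤ)) * (q * x) = q * (-qNat q n * q ^ (-(k : ℤ)) * x) := by
    ring
  have hqk : q ^ k * q ^ (-(k : ℤ)) = 1 := by
    rw [zpow_neg, zpow_natCast, mul_inv_cancel₀ (by positivity)]
  have hqn := sub_one_mul_qNat hq.ne' k
  simp only [qSzaszBasis]
  rw [harg, qExp_mul_left hq]
  set c := (q ^ (k * (k - 1) / 2))⁻¹ * (qNat q n ^ k / qFactorial q k)
  set E := qExp q (-qNat q n * q ^ (-(k : ℤ)) * x)
  linear_combination -(c * x ^ k * E) * (hqn + (q - 1) * qNat q n * x * hqk)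

lemma mul_qDeriv (q : ℝ) (g : ℝ → ℝ) (x : ℝ) :
    x * qDeriv q g x = (g (q * x) - g x) / (q - 1) := by
  rcases eq_or_ne x 0 with rfl | hx
  · simp
  · rw [qDeriv]
    field_simp

theorem qSzaszBasis_qDeriv_general (q : ℝ) (hq : 1 < q) (n : ℕ) (hn : 1 ≤ n)
    (k : ℕ) (x : ℝ) :
    x * qDeriv q (fun y => qSzaszBasis q n k y) x =
      qNat q n * (qNat q k / qNat q n - x) * qSzaszBasis q n k x := by
  rw [mul_qDeriv, qSzaszBasis_mul_left_sub hq, mul_assoc,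
    mul_div_cancel_left₀ _ (sub_ne_zero.mpr hq.ne'), mul_sub,
    mul_div_cancel₀ _ (qNat_pos hq hn).ne']

/-- `x · D_q s_{n,k}(q;x) = [n]_q ([k]_q/[n]_q - x) s_{n,k}(q;x)`. -/
theorem qSzaszBasis_qDeriv (q : ℝ) (hq : 1 < q) (n : ℕ) (hn : 1 ≤ n)
    (k : ℕ) (x : ℝ) (hx : 0 < x) :
    x * qDeriv q (fun y => qSzaszBasis q n k y) x =
      qNat q n * (qNat q k / qNat q n - x) * qSzaszBasis q n k x :=
  qSzaszBasis_qDeriv_general q hq n hn k x
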